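/- Let k ≥ 2 and let κ be an infinite cardinal. Suppose there exists n ∈ ℕ such that for every cardinal λ with 1 ≤ λ < κ there is an n-colouring of G(λ) = ⊕_{σ<λ} ℚ with the property that no infinite subset X of G(λ) has FS_k(X) ∪ {k·x : x ∈ X} monochromatic. Then there is a 2n-colouring of G(κ) = ⊕_{σ<κ} ℚ such that no infinite subset X of G(κ) has FS_k(X) ∪ {k·x : x ∈ X} monochromatic. -/

import Mathlib

open Cardinal

/-- `G κ` is the direct sum of `κ` copies of `ℚ`. -/
def G (κ : Cardinal) : Type _ := κ.out →₀ ℚ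

noncomputable instance (κ : Cardinal) : AddCommGroup (G κ) := Finsupp.instAddCommGroup

/-- Sums of `k` distinct elements of `X`. -/
def FS {α : Type*} [AddCommMonoid α] (k : ℕ) (X : Set α) : Set α :=
  {y | ∃ F : Finset α, ↑F ⊆ X ∧ F.card = k ∧ y = ∑ x ∈ F, x}

/-- `X` has `FS_k(X) ∪ {k·x : x ∈ X}` monochromatic for the colouring `c`. -/
def Mono {α β : Type*} [AddCommMonoid α] (k : ℕ) (c : α → β) (X : Set α) : Prop :=
  ∃ i : β, ∀ y ∈ FS k X ∪ (fun x => k • x) '' X, c y = i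


/-!
Well-order the index set in order type `κ.ord`, so that every initial segment `Iic a` has fewer
than `κ` elements. A nonzero `x` with largest support index `a` gets two colours: the colour, in
the given colouring of `G #(Iic a)`, of the restriction of `x` to `Iic a`, and a bit of its
leading coefficient `x a` that flips under multiplication by `k` (the parity of
`⌊v_p(q) / v_p(k)⌋` for a prime `p ∣ k`). Let `X` be infinite and monochromatic. If `k` elements
of `X` have distinct leading indices, their sum has the leading coefficient of the one, `m`, with
the largest index, while `k • m` has `k` times it: the bits differ. Otherwise infinitely many
elements of `X` share the leading index `a` and the sign of the leading coefficient, so no sum of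
`k` of them cancels at `a`, and their restrictions to `Iic a` form an infinite set that is
monochromatic for the colouring of that segment.
-/

section Mono

variable {A B β γ : Type*} [AddCommMonoid A] [AddCommMonoid B] {k : ℕ}

def NoInfiniteMono (k : ℕ) (c : A → β) : Prop :=
  ¬ ∃ X : Set A, X.Infinite ∧ Mono k c X

theorem FS_mono {X Y : Set A} (h : X ⊆ Y) : FS k X ⊆ FS k Y :=
  fun _ ⟨F, hFX, hF⟩ => ⟨F, hFX.trans h, hF⟩

theorem Mono.subset {c : A → β} {X Y : Set A} (hY : Mono k c Y) (h : X ⊆ Y) : Mono k c X :=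
  let ⟨i, hi⟩ := hY
  ⟨i, fun y hy => hi y (Set.union_subset_union (FS_mono h) (Set.image_mono h) hy)⟩

theorem FS_image (f : A →+ B) {X : Set A} (hf : Set.InjOn f X) :
    FS k (f '' X) = f '' FS k X := by
  classical
  ext y
  constructor
  · rintro ⟨F, hF, hcard, rfl⟩
    obtain ⟨F', hF'X, rfl⟩ := Finset.subset_set_image_iff.1 hF
    have hinj : Set.InjOn f F' := hf.mono hF'X
    exact ⟨∑ x ∈ F', x, ⟨F', hF'X, by rwa [Finset.card_image_of_injOn hinj] at hcard, rfl⟩,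
      by rw [map_sum, Finset.sum_image hinj]⟩
  · rintro ⟨_, ⟨F, hFX, hcard, rfl⟩, rfl⟩
    have hinj : Set.InjOn f F := hf.mono hFX
    exact ⟨F.image f, by simpa using Set.image_mono hFX,
      by rw [Finset.card_image_of_injOn hinj, hcard], by rw [map_sum, Finset.sum_image hinj]⟩

theorem mono_image_iff (f : A →+ B) {X : Set A} (hf : Set.InjOn f X) (c : B → β) :
    Mono k c (f '' X) ↔ Mono k (c ∘ f) X := by
  have hset : FS k (f '' X) ∪ (fun y => k • y) '' (f '' X) =
      f '' (FS k X ∪ (fun x => k • x) '' X) := by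
    simp only [Set.image_union, FS_image f hf, Set.image_image, map_nsmul]
  simp only [Mono, hset, Set.forall_mem_image, Function.comp_apply]

theorem NoInfiniteMono.precomp {c : B → β} (hc : NoInfiniteMono k c) (f : A →+ B)
    (hf : Function.Injective f) : NoInfiniteMono k (c ∘ f) :=
  fun ⟨X, hX, hmono⟩ =>
    hc ⟨f '' X, hX.image hf.injOn, (mono_image_iff f hf.injOn c).2 hmono⟩

theorem NoInfiniteMono.postcomp {c : A → β} (hc : NoInfiniteMono k c) {g : β → γ}
    (hg : Function.Injective g) : NoInfiniteMono k (g ∘ c) :=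
  fun ⟨X, hX, _, hi⟩ =>
    let ⟨x, hx⟩ := hX.nonempty
    have hkx : k • x ∈ FS k X ∪ (fun x => k • x) '' X := Or.inr ⟨x, hx, rfl⟩
    hc ⟨X, hX, c (k • x), fun y hy => hg ((hi y hy).trans (hi _ hkx).symm)⟩

end Mono

theorem exists_fin_two_apply_mul_ne {k : ℕ} (hk : 2 ≤ k) :
    ∃ b : ℚ → Fin 2, ∀ q ≠ 0, b (k * q) ≠ b q := by
  set p := k.minFac
  have : Fact p.Prime := ⟨Nat.minFac_prime (by omega)⟩
  set e : ℤ := (padicValNat p k : ℤ)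
  have he : e ≠ 0 := Int.natCast_ne_zero.2 <|
    Nat.one_le_iff_ne_zero.1 (one_le_padicValNat_of_dvd (by omega) (Nat.minFac_dvd k))
  refine ⟨fun q => if Even (padicValRat p q / e) then 0 else 1, fun q hq => ?_⟩
  have hval : padicValRat p (k * q) / e = padicValRat p q / e + 1 := by
    rw [padicValRat.mul (by positivity) hq, padicValRat.of_nat, add_comm,
      Int.add_ediv_of_dvd_right (dvd_refl e), Int.ediv_self he]
  simp only [hval, Int.even_add_one]
  split_ifs <;> simp_all

section LeadColouring

open Finsupp

variable {ι β γ : Type*} [LinearOrder ι] {k : ℕ}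

theorem support_max_eq_coe_iff {x : ι →₀ ℚ} {a : ι} :
    x.support.max = a ↔ x ∈ supported ℚ ℚ (Set.Iic a) ∧ x a ≠ 0 := by
  rw [mem_supported]
  refine ⟨fun h => ⟨fun j hj => Finset.le_max_of_eq hj h, mem_support_iff.1 (Finset.mem_of_max h)⟩,
    fun ⟨hsupp, ha⟩ => le_antisymm ?_ (Finset.le_max (mem_support_iff.2 ha))⟩
  exact Finset.max_le fun j hj => WithBot.coe_le_coe.2 (hsupp hj)

theorem support_max_nsmul {x : ι →₀ ℚ} {a : ι} (hk : k ≠ 0) (hx : x.support.max = a) :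
    (k • x).support.max = a := by
  rw [support_max_eq_coe_iff] at hx ⊢
  refine ⟨nsmul_mem hx.1 k, ?_⟩
  simpa [Finsupp.smul_apply, nsmul_eq_mul] using ⟨hk, hx.2⟩

theorem exists_infinite_support_max_eq_of_finite_image {X : Set (ι →₀ ℚ)} (hX : X.Infinite)
    (himg : ((fun x => x.support.max) '' X).Finite) :
    ∃ a : ι, ∃ Y ⊆ X, Y.Infinite ∧ (∀ y ∈ Y, y.support.max = a) ∧
      ∀ y ∈ Y, ∀ y' ∈ Y, 0 < y a * y' a := by
  obtain ⟨m, hm⟩ : ∃ m, (X ∩ (fun x => x.support.max) ⁻¹' {m}).Infinite := by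
    by_contra! h
    exact hX (himg.of_finite_fibers _ fun m _ => h m)
  induction m using WithBot.recBotCoe with
  | bot =>
    refine absurd ((Set.finite_singleton 0).subset fun x hx => ?_) hm
    exact support_eq_empty.1 (Finset.max_eq_bot.1 hx.2)
  | coe a =>
    set Xa := X ∩ (fun x => x.support.max) ⁻¹' {(a : WithBot ι)}
    have hsplit : Xa ⊆ {x ∈ Xa | 0 < x a} ∪ {x ∈ Xa | x a < 0} := fun x hx =>
      (support_max_eq_coe_iff.1 hx.2).2.lt_or_gt.elim (fun h => Or.inr ⟨hx, h⟩)
        (fun h => Or.inl ⟨hx, h⟩)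
    rcases Set.infinite_union.1 (hm.mono hsplit) with hpos | hneg
    · exact ⟨a, _, fun x hx => hx.1.1, hpos, fun y hy => hy.1.2,
        fun y hy y' hy' => mul_pos hy.2 hy'.2⟩
    · exact ⟨a, _, fun x hx => hx.1.1, hneg, fun y hy => hy.1.2,
        fun y hy y' hy' => mul_pos_of_neg_of_neg hy.2 hy'.2⟩

variable [Nonempty β] (b : ℚ → γ) (c : ∀ a : ι, (Set.Iic a →₀ ℚ) → β)

noncomputable def leadColouring (x : ι →₀ ℚ) : γ × β :=
  WithBot.recBotCoe (b 0, Classical.arbitrary β)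
    (fun a => (b (x a), c a (x.subtypeDomain (· ∈ Set.Iic a)))) x.support.max

theorem leadColouring_of_support_max_eq {x : ι →₀ ℚ} {a : ι} (h : x.support.max = a) :
    leadColouring b c x = (b (x a), c a (x.subtypeDomain (· ∈ Set.Iic a))) := by
  rw [leadColouring, h]
  rfl

theorem not_mono_leadColouring_of_injOn (hk : k ≠ 0) (hb : ∀ q ≠ 0, b (k * q) ≠ b q)
    {X : Set (ι →₀ ℚ)} {F : Finset (ι →₀ ℚ)} (hFX : ↑F ⊆ X) (hcard : F.card = k) (hF0 : 0 ∉ F)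
    (hinj : Set.InjOn (fun x : ι →₀ ℚ => x.support.max) F) : ¬ Mono k (leadColouring b c) X := by
  rintro ⟨i, hi⟩
  obtain ⟨m, hmF, hmax⟩ := F.exists_max_image (fun x => x.support.max)
    (Finset.card_pos.1 (by omega))
  obtain ⟨a, ha⟩ := Finset.max_of_nonempty (support_nonempty_iff.2 (ne_of_mem_of_not_mem hmF hF0))
  obtain ⟨hm_supp, hm_ne⟩ := support_max_eq_coe_iff.1 ha
  have hbelow : ∀ x ∈ F, x ≠ m → x ∈ supported ℚ ℚ (Set.Iic a) ∧ x a = 0 := by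
    intro x hx hxm
    have hlt : x.support.max < a :=
      (ha ▸ hmax x hx).lt_of_ne fun h => hxm (hinj hx hmF (h.trans ha.symm))
    exact ⟨(mem_supported _ _).2 fun j hj => WithBot.coe_le_coe.1 ((Finset.le_max hj).trans hlt.le),
      notMem_support_iff.1 (Finset.notMem_of_max_lt_coe hlt)⟩
  have happly : (∑ x ∈ F, x) a = m a := by
    rw [finsetSum_apply, Finset.sum_eq_single_of_mem m hmF fun x hx hxm => (hbelow x hx hxm).2]
  have hsum : (∑ x ∈ F, x).support.max = a := by
    refine support_max_eq_coe_iff.2 ⟨Submodule.sum_mem _ fun x hx => ?_, happly ▸ hm_ne⟩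
    by_cases hxm : x = m
    · exact hxm ▸ hm_supp
    · exact (hbelow x hx hxm).1
  have hsum_colour := hi _ (Or.inl ⟨F, hFX, hcard, rfl⟩)
  have hnsmul_colour := hi _ (Or.inr ⟨m, hFX hmF, rfl⟩)
  rw [leadColouring_of_support_max_eq b c hsum] at hsum_colour
  rw [leadColouring_of_support_max_eq b c (support_max_nsmul hk ha)] at hnsmul_colour
  have hbits := congrArg Prod.fst (hsum_colour.trans hnsmul_colour.symm)
  simp only [happly, Finsupp.smul_apply, nsmul_eq_mul] at hbits
  exact hb (m a) hm_ne hbits.symm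

theorem not_mono_leadColouring_of_support_max_eq (hk : k ≠ 0) (hc : ∀ a, NoInfiniteMono k (c a))
    {Y : Set (ι →₀ ℚ)} (hY : Y.Infinite) {a : ι} (hYa : ∀ y ∈ Y, y.support.max = a)
    (hsign : ∀ y ∈ Y, ∀ y' ∈ Y, 0 < y a * y' a) : ¬ Mono k (leadColouring b c) Y := by
  set R : (ι →₀ ℚ) →+ (Set.Iic a →₀ ℚ) := subtypeDomainAddMonoidHom
  have hR : Set.InjOn R Y := by
    intro y hy y' hy' h
    ext j
    by_cases hj : j ≤ a
    · exact DFunLike.congr_fun h ⟨j, hj⟩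
    · have hout : ∀ x ∈ Y, x j = 0 := fun x hx => notMem_support_iff.1 fun hj' =>
        hj ((mem_supported _ _).1 (support_max_eq_coe_iff.1 (hYa x hx)).1 hj')
      rw [hout y hy, hout y' hy']
  have hlead : ∀ z ∈ FS k Y ∪ (fun y => k • y) '' Y, z.support.max = a := by
    rintro z (⟨F, hFY, hcard, rfl⟩ | ⟨y, hy, rfl⟩)
    · obtain ⟨y₀, hy₀⟩ := Finset.card_pos.1 (hcard ▸ Nat.pos_of_ne_zero hk)
      have hpos : 0 < y₀ a * ∑ y ∈ F, y a := by
        rw [Finset.mul_sum]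
        exact Finset.sum_pos (fun y hy => hsign _ (hFY hy₀) _ (hFY hy)) ⟨y₀, hy₀⟩
      refine support_max_eq_coe_iff.2 ⟨Submodule.sum_mem _ fun y hy =>
        (support_max_eq_coe_iff.1 (hYa y (hFY hy))).1, ?_⟩
      rw [finsetSum_apply]
      exact right_ne_zero_of_mul hpos.ne'
    · exact support_max_nsmul hk (hYa y hy)
  rintro ⟨i, hi⟩
  refine hc a ⟨R '' Y, hY.image hR, (mono_image_iff R hR _).2 ⟨i.2, fun z hz => ?_⟩⟩
  rw [Function.comp_apply, ← hi z hz, leadColouring_of_support_max_eq b c (hlead z hz)]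
  rfl

theorem leadColouring_noInfiniteMono (hk : k ≠ 0) (hb : ∀ q ≠ 0, b (k * q) ≠ b q)
    (hc : ∀ a, NoInfiniteMono k (c a)) : NoInfiniteMono k (leadColouring b c) := by
  rintro ⟨X, hX, hmono⟩
  by_cases himg : ((fun x : ι →₀ ℚ => x.support.max) '' X).Finite
  · obtain ⟨a, Y, hYX, hY, hYa, hsign⟩ := exists_infinite_support_max_eq_of_finite_image hX himg
    exact not_mono_leadColouring_of_support_max_eq b c hk hc hY hYa hsign (hmono.subset hYX)
  · obtain ⟨X', hX'X, hbij⟩ := Set.exists_subset_bijOn X fun x : ι →₀ ℚ => x.support.max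
    have hX' : X'.Infinite := Set.Infinite.of_image _ (hbij.image_eq ▸ himg)
    obtain ⟨F, hF, hcard⟩ := (hX'.sdiff (Set.finite_singleton 0)).exists_subset_card_eq k
    exact not_mono_leadColouring_of_injOn b c hk hb (hF.trans (Set.sdiff_subset.trans hX'X))
      hcard (fun h => (hF h).2 rfl) (hbij.injOn.mono (hF.trans Set.sdiff_subset)) hmono

end LeadColouring

theorem mk_Iic_toType_ord_lt {κ : Cardinal} (hκ : ℵ₀ ≤ κ) (a : κ.ord.ToType) :
    #(Set.Iic a) < κ := by
  have hmk : #κ.ord.ToType = κ := by simp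
  have := mk_Iic_lt a (by rw [hmk, Ordinal.type_toType]) (by rwa [hmk])
  rwa [hmk] at this

theorem stmt_5 (k : ℕ) (hk : 2 ≤ k) (κ : Cardinal) (hκ : ℵ₀ ≤ κ) (n : ℕ)
    (hn : ∀ lam : Cardinal, 1 ≤ lam → lam < κ →
      ∃ c : G lam → Fin n, ¬ ∃ X : Set (G lam), X.Infinite ∧ Mono k c X) :
    ∃ c : G κ → Fin (2 * n), ¬ ∃ X : Set (G κ), X.Infinite ∧ Mono k c X := by
  obtain ⟨b, hb⟩ := exists_fin_two_apply_mul_ne hk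
  choose c hc using fun a : κ.ord.ToType => hn _
    (Cardinal.one_le_iff_ne_zero.2 (mk_ne_zero_iff.2 ⟨⟨a, le_refl a⟩⟩)) (mk_Iic_toType_ord_lt hκ a)
  have hmk : #κ.ord.ToType = κ := by simp
  have : Nonempty κ.ord.ToType := mk_ne_zero_iff.1 (by rw [hmk]; exact (aleph0_pos.trans_le hκ).ne')
  have : Nonempty (Fin n) := ⟨c (Classical.arbitrary _) 0⟩
  obtain ⟨e⟩ : Nonempty (κ.out ≃ κ.ord.ToType) := Cardinal.eq.1 (by rw [mk_out, hmk])
  let c' (a : κ.ord.ToType) : (Set.Iic a →₀ ℚ) → Fin n :=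
    c a ∘ (Finsupp.domCongr outMkEquiv).symm.toAddMonoidHom
  have hc' (a : κ.ord.ToType) : NoInfiniteMono k (c' a) :=
    NoInfiniteMono.precomp (hc a) _ (Finsupp.domCongr outMkEquiv).symm.injective
  exact ⟨_, ((leadColouring_noInfiniteMono b c' (by omega) hb hc').precomp
    (Finsupp.domCongr e).toAddMonoidHom (Finsupp.domCongr e).injective).postcomp
    finProdFinEquiv.injective⟩
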